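/- arXiv:1011.0987 — 2 statements merged into one kernel-verified Lean document; each statement's English description precedes it below -/
import Mathlib

section
/- Let N ≥ 2. For every N-GHZ state ψ ∈ ℂ^{2^N} there exist angles θ_1,…,θ_N, φ_1,…,φ_N ∈ ℝ and 2×2 unitaries V_1,…,V_N such that, setting A = ⊗_{l=1}^N V_l A(θ_l,φ_l) V_l^† and B = ⊗_{l=1}^N V_l σ_Z V_l^†, the common +1 eigenspace of A and B is one-dimensional and spanned by ψ. -/
open Matrix Finset

/-- Tensor product of `N` 2×2 complex matrices, indexed by bit strings. -/
noncomputable def tensorN {N : ℕ} (M : Fin N → Matrix (Fin 2) (Fin 2) ℂ) :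
    Matrix (Fin N → Fin 2) (Fin N → Fin 2) ℂ :=
  fun i j => ∏ l, M l (i l) (j l)

/-- The spin observable `A(θ,φ)`. -/
noncomputable def spinA (θ φ : ℝ) : Matrix (Fin 2) (Fin 2) ℂ :=
  !![(Real.cos θ : ℂ), Complex.exp (-(φ : ℂ) * Complex.I) * (Real.sin θ : ℂ);
     Complex.exp ((φ : ℂ) * Complex.I) * (Real.sin θ : ℂ), -(Real.cos θ : ℂ)]

/-- The Pauli matrix `σ_Z`. -/
def sigmaZ : Matrix (Fin 2) (Fin 2) ℂ := !![1, 0; 0, -1]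

/-- The standard GHZ state `(|0…0⟩ + |1…1⟩)/√2` in `ℂ^{2^N}`. -/
noncomputable def ghzN (N : ℕ) : (Fin N → Fin 2) → ℂ :=
  (Real.sqrt 2 : ℂ)⁻¹ • (Pi.single (fun _ => 0) 1 + Pi.single (fun _ => 1) 1)

/-- A state is an `N`-GHZ state if it is a local-unitary image of `ghzN N`. -/
def IsGHZ {N : ℕ} (ψ : (Fin N → Fin 2) → ℂ) : Prop :=
  ∃ U : Fin N → Matrix (Fin 2) (Fin 2) ℂ,
    (∀ l, U l ∈ Matrix.unitaryGroup (Fin 2) ℂ) ∧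
    ψ = (tensorN U).mulVec (ghzN N)

/-!
Write `ψ = (⊗ U_l) ghzN N` and take `V_l = U_l H` with `H` the Hadamard gate, `φ_l = π/2`.
Up to conjugation by `⊗ U_l`, the two observables become `⊗ [[0, c_l], [c_l⁻¹, 0]]` with
`c_l = e^{iθ_l}` and `X^{⊗N}`. Both send `|i⟩` to a multiple of the complemented string `|ī⟩`,
the first with the phase `ζ ^ #{l | i_l = 0}` when `c_l² = ζ` is a primitive `N`-th root of unity
and `∏ c_l = 1`. A common fixed vector is therefore invariant under complementation and vanishes
at every `i` except the two constant strings, i.e. it is a multiple of the GHZ state.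
-/

section Tensor

variable {N : ℕ}

lemma tensorN_mul (M M' : Fin N → Matrix (Fin 2) (Fin 2) ℂ) :
    tensorN (fun l => M l * M' l) = tensorN M * tensorN M' := by
  ext i j
  simp only [tensorN, mul_apply, Fintype.prod_sum, prod_mul_distrib]

lemma tensorN_conjTranspose (M : Fin N → Matrix (Fin 2) (Fin 2) ℂ) :
    (tensorN M)ᴴ = tensorN (fun l => (M l)ᴴ) := by
  ext i j
  simp only [tensorN, conjTranspose_apply, star_prod]

lemma tensorN_one : tensorN (fun _ : Fin N => (1 : Matrix (Fin 2) (Fin 2) ℂ)) = 1 := by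
  ext i j
  simp [tensorN, one_apply, prod_ite_zero, funext_iff]

lemma tensorN_mem_unitaryGroup {U : Fin N → Matrix (Fin 2) (Fin 2) ℂ}
    (hU : ∀ l, U l ∈ unitaryGroup (Fin 2) ℂ) :
    tensorN U ∈ unitaryGroup (Fin N → Fin 2) ℂ := by
  rw [mem_unitaryGroup_iff, star_eq_conjTranspose, tensorN_conjTranspose, ← tensorN_mul]
  simp_rw [← star_eq_conjTranspose, mem_unitaryGroup_iff.mp (hU _)]
  exact tensorN_one

lemma tensorN_conj (U C : Fin N → Matrix (Fin 2) (Fin 2) ℂ) :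
    tensorN (fun l => U l * C l * (U l)ᴴ) = tensorN U * tensorN C * (tensorN U)ᴴ := by
  rw [tensorN_conjTranspose, ← tensorN_mul, ← tensorN_mul]

end Tensor

lemma mul_mul_conjTranspose_mul {n α : Type*} [Fintype n] [CommRing α] [StarRing α]
    (U W C : Matrix n n α) : U * W * C * (U * W)ᴴ = U * (W * C * Wᴴ) * Uᴴ := by
  simp only [conjTranspose_mul, Matrix.mul_assoc]

section Conj

variable {n α : Type*} [Fintype n] [DecidableEq n] [CommRing α] [StarRing α] {W : Matrix n n α}

lemma conj_mulVec_eq_self_iff (hW : W ∈ unitaryGroup n α) (A : Matrix n n α) (χ : n → α) :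
    (W * A * Wᴴ) *ᵥ χ = χ ↔ A *ᵥ (Wᴴ *ᵥ χ) = Wᴴ *ᵥ χ := by
  have hWW : Wᴴ * W = 1 := mem_unitaryGroup_iff'.mp hW
  have hWW' : W * Wᴴ = 1 := mem_unitaryGroup_iff.mp hW
  constructor
  · intro h
    simpa [mulVec_mulVec, ← Matrix.mul_assoc, hWW] using congrArg (Wᴴ *ᵥ ·) h
  · intro h
    simpa [mulVec_mulVec, ← Matrix.mul_assoc, hWW'] using congrArg (W *ᵥ ·) h

lemma setOf_conj_mulVec_eq_self (hW : W ∈ unitaryGroup n α) (A B : Matrix n n α) :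
    {χ | (W * A * Wᴴ) *ᵥ χ = χ ∧ (W * B * Wᴴ) *ᵥ χ = χ} =
      W.mulVecLin '' {χ | A *ᵥ χ = χ ∧ B *ᵥ χ = χ} := by
  have hWW : Wᴴ * W = 1 := mem_unitaryGroup_iff'.mp hW
  have hWW' : W * Wᴴ = 1 := mem_unitaryGroup_iff.mp hW
  ext χ
  simp only [Set.mem_ofPred_eq, conj_mulVec_eq_self_iff hW]
  constructor
  · intro h
    exact ⟨Wᴴ *ᵥ χ, h, by simp [mulVec_mulVec, hWW']⟩
  · rintro ⟨ξ, hξ, rfl⟩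
    simpa [mulVec_mulVec, hWW] using hξ

end Conj

noncomputable def hadamardGate : Matrix (Fin 2) (Fin 2) ℂ := (√2 : ℂ)⁻¹ • !![1, 1; 1, -1]

noncomputable def flipPhase (c : ℂ) : Matrix (Fin 2) (Fin 2) ℂ := !![0, c; c⁻¹, 0]

lemma hadamardGate_conjTranspose : hadamardGateᴴ = hadamardGate := by
  ext i j
  fin_cases i <;> fin_cases j <;> simp [hadamardGate, Complex.conj_ofReal]

lemma hadamardGate_conj (a b c d : ℂ) :
    hadamardGate * !![a, b; c, d] * hadamardGateᴴ =
      !![(a + b + c + d) / 2, (a - b + c - d) / 2; (a + b - c - d) / 2, (a - b - c + d) / 2] := by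
  have h2 : (√2 : ℂ) ^ 2 = 2 := by norm_cast; simp
  rw [hadamardGate_conjTranspose]
  ext i j
  fin_cases i <;> fin_cases j <;> simp [hadamardGate, mul_apply] <;> field_simp <;>
    simp [h2] <;> ring

lemma hadamardGate_mem_unitaryGroup : hadamardGate ∈ unitaryGroup (Fin 2) ℂ := by
  have h := hadamardGate_conj 1 0 0 1
  norm_num [← one_fin_two] at h
  rwa [mem_unitaryGroup_iff, star_eq_conjTranspose]

lemma hadamardGate_conj_sigmaZ : hadamardGate * sigmaZ * hadamardGateᴴ = flipPhase 1 := by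
  rw [sigmaZ, hadamardGate_conj, flipPhase]
  norm_num

lemma hadamardGate_conj_spinA (θ : ℝ) :
    hadamardGate * spinA θ (Real.pi / 2) * hadamardGateᴴ =
      flipPhase (Complex.exp (θ * Complex.I)) := by
  have hI : Complex.exp (-(↑(Real.pi / 2) : ℂ) * Complex.I) = -Complex.I := by
    rw [neg_mul, Complex.exp_neg, Complex.exp_mul_I]
    simp
  have hI' : Complex.exp ((↑(Real.pi / 2) : ℂ) * Complex.I) = Complex.I := by
    rw [Complex.exp_mul_I]
    simp
  rw [spinA, hadamardGate_conj, flipPhase, hI, hI', ← Complex.exp_neg, ← neg_mul,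
    Complex.exp_mul_I, Complex.exp_mul_I]
  simp only [Complex.cos_neg, Complex.sin_neg, ← Complex.ofReal_cos, ← Complex.ofReal_sin]
  ext i j
  fin_cases i <;> fin_cases j <;> simp <;> ring

section Frame

variable {N : ℕ}

lemma flipPhase_apply_self (c : ℂ) (b : Fin 2) : flipPhase c b b = 0 := by
  fin_cases b <;> rfl

lemma flipPhase_apply_rev (c : ℂ) (b : Fin 2) :
    flipPhase c b b.rev = if b = 0 then c else c⁻¹ := by
  fin_cases b <;> rfl

lemma tensorN_flipPhase_mulVec_apply (c : Fin N → ℂ) (χ : (Fin N → Fin 2) → ℂ)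
    (i : Fin N → Fin 2) :
    (tensorN (fun l => flipPhase (c l)) *ᵥ χ) i =
      (∏ l, if i l = 0 then c l else (c l)⁻¹) * χ (Fin.rev ∘ i) := by
  simp only [mulVec, dotProduct, tensorN]
  rw [sum_eq_single (Fin.rev ∘ i)]
  · simp only [Function.comp_apply, flipPhase_apply_rev]
  · intro j _ hj
    obtain ⟨l, hl⟩ : ∃ l, j l ≠ (i l).rev := by
      by_contra! h
      exact hj (funext h)
    have hjl : j l = i l := by
      revert hl; generalize j l = a; generalize i l = b
      fin_cases a <;> fin_cases b <;> decide
    rw [prod_eq_zero (mem_univ l) (by rw [hjl, flipPhase_apply_self]), zero_mul]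
  · simp

lemma prod_ite_inv_eq_pow_card {ι K : Type*} [Fintype ι] [Field K] {ζ : K} {c : ι → K}
    (hsq : ∀ l, c l ^ 2 = ζ) (hprod : ∏ l, c l = 1) (p : ι → Prop) [DecidablePred p] :
    ∏ l, (if p l then c l else (c l)⁻¹) = ζ ^ #{l | p l} := by
  have hc : ∀ l, c l ≠ 0 := fun l =>
    (prod_ne_zero_iff.mp (hprod ▸ one_ne_zero)) l (mem_univ l)
  calc ∏ l, (if p l then c l else (c l)⁻¹)
      = ∏ l, (c l)⁻¹ * (if p l then ζ else 1) := by
        refine prod_congr rfl fun l _ => ?_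
        split_ifs
        · rw [← hsq l]; field_simp
        · rw [mul_one]
    _ = ζ ^ #{l | p l} := by
        rw [prod_mul_distrib, prod_inv_distrib, hprod, inv_one, one_mul, prod_ite,
          prod_const, prod_const_one, mul_one]

lemma IsPrimitiveRoot.pow_card_filter_eq_one_iff {M : Type*} [CommMonoid M] {ζ : M} (hζ : IsPrimitiveRoot ζ N)
    (i : Fin N → Fin 2) : ζ ^ #{l | i l = 0} = 1 ↔ ∃ b, i = fun _ => b := by
  rw [hζ.pow_eq_one_iff_dvd]
  constructor
  · intro hdvd
    have hcard : #(univ : Finset (Fin N)) = N := by simp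
    rcases (card_filter_le univ fun l => i l = 0).lt_or_eq with hlt | heq
    · refine ⟨1, funext fun l => ?_⟩
      have h0 := card_filter_eq_zero_iff.mp
        (Nat.eq_zero_of_dvd_of_lt hdvd (hlt.trans_eq hcard)) l (mem_univ l)
      revert h0; generalize i l = a
      fin_cases a <;> decide
    · refine ⟨0, funext fun l => ?_⟩
      exact card_filter_eq_iff.mp heq l (mem_univ l)
  · rintro ⟨b, rfl⟩
    fin_cases b <;> simp

lemma exists_comp_rev_eq_const_iff {i : Fin N → Fin 2} :
    (∃ b, Fin.rev ∘ i = fun _ => b) ↔ ∃ b, i = fun _ => b := by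
  constructor
  · rintro ⟨b, h⟩
    refine ⟨b.rev, funext fun l => ?_⟩
    rw [← Fin.rev_rev (i l)]
    exact congrArg Fin.rev (congrFun h l)
  · rintro ⟨b, rfl⟩
    exact ⟨b.rev, rfl⟩

lemma ghzN_apply (hN : N ≠ 0) (i : Fin N → Fin 2) :
    ghzN N i = if ∃ b, i = fun _ => b then (√2 : ℂ)⁻¹ else 0 := by
  have h01 : (fun _ : Fin N => (0 : Fin 2)) ≠ fun _ => 1 := fun h => by
    simpa using congrFun h ⟨0, Nat.pos_of_ne_zero hN⟩
  by_cases h : ∃ b, i = fun _ => b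
  · obtain ⟨b, rfl⟩ := h
    fin_cases b <;> simp [ghzN, h01, h01.symm]
  · push Not at h
    simp [ghzN, h]

lemma mem_span_ghzN_iff (hN : N ≠ 0) (χ : (Fin N → Fin 2) → ℂ) :
    χ ∈ Submodule.span ℂ {ghzN N} ↔
      (∀ i, χ (Fin.rev ∘ i) = χ i) ∧ ∀ i, (¬∃ b, i = fun _ => b) → χ i = 0 := by
  rw [Submodule.mem_span_singleton]
  constructor
  · rintro ⟨a, rfl⟩
    refine ⟨fun i => ?_, fun i hi => ?_⟩
    · simp only [Pi.smul_apply, ghzN_apply hN, exists_comp_rev_eq_const_iff]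
    · simp only [Pi.smul_apply, ghzN_apply hN, if_neg hi, smul_zero]
  · rintro ⟨hrev, hzero⟩
    have hconst : ∀ b, χ (fun _ => b) = χ (fun _ => 0) := by
      intro b
      fin_cases b
      · rfl
      · exact hrev fun _ => 0
    refine ⟨√2 * χ (fun _ => 0), funext fun i => ?_⟩
    by_cases hi : ∃ b, i = fun _ => b
    · obtain ⟨b, rfl⟩ := hi
      rw [Pi.smul_apply, smul_eq_mul, ghzN_apply hN, if_pos ⟨b, rfl⟩, hconst b]
      field_simp
    · simp only [Pi.smul_apply, ghzN_apply hN, if_neg hi, smul_zero, hzero i hi]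

theorem setOf_flipPhase_fixed_eq_span_ghzN (hN : N ≠ 0) {ζ : ℂ} (hζ : IsPrimitiveRoot ζ N)
    {c : Fin N → ℂ} (hsq : ∀ l, c l ^ 2 = ζ) (hprod : ∏ l, c l = 1) :
    {χ | tensorN (fun l => flipPhase (c l)) *ᵥ χ = χ ∧
        tensorN (fun _ => flipPhase 1) *ᵥ χ = χ} = ↑(Submodule.span ℂ {ghzN N}) := by
  ext χ
  rw [Set.mem_ofPred_eq, SetLike.mem_coe, mem_span_ghzN_iff hN, funext_iff, funext_iff]
  simp only [tensorN_flipPhase_mulVec_apply, prod_ite_inv_eq_pow_card hsq hprod _, inv_one,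
    ite_self, prod_const_one, one_mul]
  constructor
  · rintro ⟨hphase, hrev⟩
    refine ⟨hrev, fun i hi => ?_⟩
    have hfactor : (ζ ^ #{l | i l = 0} - 1) * χ i = 0 := by
      linear_combination hphase i - ζ ^ #{l | i l = 0} * hrev i
    exact (mul_eq_zero.mp hfactor).resolve_left
      (sub_ne_zero.mpr (mt (hζ.pow_card_filter_eq_one_iff i).mp hi))
  · rintro ⟨hrev, hzero⟩
    refine ⟨fun i => ?_, hrev⟩
    rw [hrev]
    by_cases hi : ∃ b, i = fun _ => b
    · rw [(hζ.pow_card_filter_eq_one_iff i).mpr hi, one_mul]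
    · rw [hzero i hi, mul_zero]

end Frame

open Real in
lemma exists_angles_exp_sq_eq_and_prod_exp_eq_one {N : ℕ} (hN : N ≠ 0) :
    ∃ θ : Fin N → ℝ,
      (∀ l, Complex.exp (θ l * Complex.I) ^ 2 = Complex.exp (2 * π * Complex.I / N)) ∧
        ∏ l, Complex.exp (θ l * Complex.I) = 1 := by
  let l₀ : Fin N := ⟨0, Nat.pos_of_ne_zero hN⟩
  -- Shifting one angle by `π` keeps every `e^{2iθ_l}` and makes the angles sum to `0`.
  refine ⟨fun l => π / N - if l = l₀ then π else 0, fun l => ?_, ?_⟩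
  · dsimp only
    rw [sq, ← Complex.exp_add]
    split_ifs
    · rw [← Complex.exp_periodic.sub_eq (2 * π * Complex.I / N)]
      congr 1
      push_cast
      ring
    · congr 1
      push_cast
      ring
  · have hsum : ∑ l, (π / N - if l = l₀ then π else 0) = 0 := by
      rw [sum_sub_distrib, sum_ite_eq', if_pos (mem_univ _), sum_const, card_univ,
        Fintype.card_fin, nsmul_eq_mul]
      field_simp
      ring
    rw [← Complex.exp_sum, ← sum_mul, ← Complex.ofReal_sum, hsum, Complex.ofReal_zero, zero_mul,
      Complex.exp_zero]

theorem stmt2 (N : ℕ) (hN : 2 ≤ N) (ψ : (Fin N → Fin 2) → ℂ) (hψ : IsGHZ ψ) :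
    ∃ (θ φ : Fin N → ℝ) (V : Fin N → Matrix (Fin 2) (Fin 2) ℂ),
      (∀ l, V l ∈ Matrix.unitaryGroup (Fin 2) ℂ) ∧
      {χ : (Fin N → Fin 2) → ℂ |
          (tensorN (fun l => V l * spinA (θ l) (φ l) * (V l)ᴴ)).mulVec χ = χ ∧
          (tensorN (fun l => V l * sigmaZ * (V l)ᴴ)).mulVec χ = χ}
        = ↑(Submodule.span ℂ {ψ}) := by
  obtain ⟨U, hU, rfl⟩ := hψ
  have hN0 : N ≠ 0 := by omega
  obtain ⟨θ, hsq, hprod⟩ := exists_angles_exp_sq_eq_and_prod_exp_eq_one hN0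
  refine ⟨θ, fun _ => Real.pi / 2, fun l => U l * hadamardGate,
    fun l => mul_mem (hU l) hadamardGate_mem_unitaryGroup, ?_⟩
  simp only [mul_mul_conjTranspose_mul, hadamardGate_conj_spinA, hadamardGate_conj_sigmaZ,
    tensorN_conj]
  rw [setOf_conj_mulVec_eq_self (tensorN_mem_unitaryGroup hU),
    setOf_flipPhase_fixed_eq_span_ghzN hN0 (Complex.isPrimitiveRoot_exp N hN0) hsq hprod,
    ← Submodule.map_coe, Submodule.map_span, Set.image_singleton, mulVecLin_apply]
end

section
/- Let N ≥ 2 and consider the N observables on ℂ^{2^N}: P_1 = σ_X^{⊗N}, and for k = 2,…,N, P_k = the tensor product ⊗_{l=1}^N M_l where M_1 = σ_Z, M_k = σ_Z, and M_l = I for l ∉ {1,k}. Then the common +1 eigenspace {ψ : P_k ψ = ψ for all k = 1,…,N} is one-dimensional and is spanned by the GHZ state (1/√2)(|00…0⟩ + |11…1⟩). -/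
/-!
For `k ≠ 0` the stabilizer `σ_Z ⊗ σ_Z` on qubits `0, k` is diagonal, with eigenvalue `-1` exactly
on the bit strings whose bits `0` and `k` differ; so a common fixed vector vanishes off the two
constant strings `0…0` and `1…1`. The remaining stabilizer `σ_X^{⊗N}` flips every bit, which
forces equal amplitudes on those two strings.
-/

open Matrix Finset

/-- The Pauli matrix `σ_X`. -/
def sigmaX : Matrix (Fin 2) (Fin 2) ℂ := !![0, 1; 1, 0]

/-- `P 0 = σ_X^{⊗N}`; for `k ≠ 0`, `P k` has `σ_Z` on qubits `0` and `k` and `I` elsewhere. -/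
noncomputable def stabP (N : ℕ) (k : Fin N) :
    Matrix (Fin N → Fin 2) (Fin N → Fin 2) ℂ :=
  if (k : ℕ) = 0 then tensorN (fun _ => sigmaX)
  else tensorN (fun l => if (l : ℕ) = 0 ∨ l = k then sigmaZ else 1)

lemma tensorN_eq_diagonal {N : ℕ} {M : Fin N → Matrix (Fin 2) (Fin 2) ℂ}
    (hM : ∀ l, (M l).IsDiag) : tensorN M = diagonal fun i => ∏ l, M l (i l) (i l) := by
  ext i j
  by_cases hij : i = j
  · simp [hij, tensorN]
  · obtain ⟨l, hl⟩ := Function.ne_iff.1 hij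
    rw [diagonal_apply_ne _ hij]
    exact prod_eq_zero (mem_univ l) (hM l hl)

lemma sigmaX_apply (a b : Fin 2) : sigmaX a b = if b = a.rev then 1 else 0 := by
  fin_cases a <;> fin_cases b <;> rfl

lemma tensorN_sigmaX_mulVec {N : ℕ} (ψ : (Fin N → Fin 2) → ℂ) (i : Fin N → Fin 2) :
    (tensorN (fun _ => sigmaX) *ᵥ ψ) i = ψ (fun l => (i l).rev) := by
  have hrow (j : Fin N → Fin 2) :
      (∏ l, sigmaX (i l) (j l)) = if j = fun l => (i l).rev then 1 else 0 := by
    simp [sigmaX_apply, prod_boole, funext_iff]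
  simp [mulVec, dotProduct, tensorN, hrow]

lemma isDiag_sigmaZ : sigmaZ.IsDiag := by
  intro a b h
  fin_cases a <;> fin_cases b <;> simp_all [sigmaZ]

lemma sigmaZ_apply_self_mul_apply_self (a b : Fin 2) :
    sigmaZ a a * sigmaZ b b = if a = b then 1 else -1 := by
  fin_cases a <;> fin_cases b <;> simp [sigmaZ]

lemma stabP_of_val_ne_zero {N : ℕ} {k : Fin N} (hk : (k : ℕ) ≠ 0) :
    stabP N k = diagonal fun i => if i ⟨0, k.pos⟩ = i k then 1 else -1 := by
  have hM : ∀ l : Fin N, (if (l : ℕ) = 0 ∨ l = k then sigmaZ else 1).IsDiag := by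
    intro l; split_ifs
    exacts [isDiag_sigmaZ, isDiag_one]
  rw [stabP, if_neg hk, tensorN_eq_diagonal hM]
  congr 1; funext i
  rw [prod_eq_mul ⟨0, k.pos⟩ k (fun h => hk (congrArg Fin.val h).symm)]
  · simp [hk, sigmaZ_apply_self_mul_apply_self]
  · intro l _ ⟨hl0, hlk⟩
    have : ¬((l : ℕ) = 0 ∨ l = k) := by
      rintro (h | h)
      exacts [hl0 (Fin.ext h), hlk h]
    simp [this]
  all_goals simp

lemma stabP_mulVec_eq_self_iff_of_val_eq_zero {N : ℕ} {k : Fin N} (hk : (k : ℕ) = 0)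
    (ψ : (Fin N → Fin 2) → ℂ) :
    stabP N k *ᵥ ψ = ψ ↔ ∀ i, ψ (fun l => (i l).rev) = ψ i := by
  simp only [stabP, if_pos hk, funext_iff, tensorN_sigmaX_mulVec]

lemma stabP_mulVec_eq_self_iff_of_val_ne_zero {N : ℕ} {k : Fin N} (hk : (k : ℕ) ≠ 0)
    (ψ : (Fin N → Fin 2) → ℂ) :
    stabP N k *ᵥ ψ = ψ ↔ ∀ i : Fin N → Fin 2, i ⟨0, k.pos⟩ ≠ i k → ψ i = 0 := by
  simp only [stabP_of_val_ne_zero hk, funext_iff, mulVec_diagonal]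
  refine forall_congr' fun i => ?_
  split_ifs with h <;> simp [h, neg_eq_self]

lemma ghzN_apply_rev {N : ℕ} (i : Fin N → Fin 2) :
    ghzN N (fun l => (i l).rev) = ghzN N i := by
  simp only [ghzN, Pi.smul_apply, Pi.add_apply, Pi.single_apply, funext_iff, Fin.rev_eq_iff]
  rw [add_comm]; rfl

lemma ghzN_apply_of_ne {N : ℕ} {i : Fin N → Fin 2} {l m : Fin N} (h : i l ≠ i m) :
    ghzN N i = 0 := by
  have hc : ∀ a : Fin 2, i ≠ fun _ => a := fun a hi => h (by simp [hi])
  simp [ghzN, hc]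

lemma ghzN_apply_const {N : ℕ} (hN : 0 < N) (a : Fin 2) :
    ghzN N (fun _ => a) = (Real.sqrt 2 : ℂ)⁻¹ := by
  have h01 : (fun _ : Fin N => (0 : Fin 2)) ≠ fun _ => 1 := fun h =>
    absurd (congrFun h ⟨0, hN⟩) (by decide)
  fin_cases a <;> simp [ghzN, h01, h01.symm]

lemma stabP_mulVec_ghzN {N : ℕ} (k : Fin N) : stabP N k *ᵥ ghzN N = ghzN N := by
  by_cases hk : (k : ℕ) = 0
  · exact (stabP_mulVec_eq_self_iff_of_val_eq_zero hk _).2 ghzN_apply_rev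
  · exact (stabP_mulVec_eq_self_iff_of_val_ne_zero hk _).2 fun _ hi => ghzN_apply_of_ne hi

lemma eq_smul_ghzN {N : ℕ} (hN : 0 < N) {ψ : (Fin N → Fin 2) → ℂ}
    (hrev : ∀ i, ψ (fun l => (i l).rev) = ψ i)
    (hvan : ∀ i (l : Fin N), i ⟨0, hN⟩ ≠ i l → ψ i = 0) :
    ψ = (Real.sqrt 2 * ψ fun _ => 0 : ℂ) • ghzN N := by
  funext i
  by_cases hconst : ∃ l, i ⟨0, hN⟩ ≠ i l
  · obtain ⟨l, hl⟩ := hconst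
    rw [hvan i l hl, Pi.smul_apply, ghzN_apply_of_ne hl, smul_zero]
  · push Not at hconst
    have hi : i = fun _ => i ⟨0, hN⟩ := funext fun l => (hconst l).symm
    have hψ : ∀ a : Fin 2, ψ (fun _ => a) = ψ fun _ => 0 := by
      intro a
      fin_cases a
      exacts [rfl, hrev fun _ => 0]
    have hsqrt : (Real.sqrt 2 : ℂ) ≠ 0 := by simp
    rw [hi, hψ, Pi.smul_apply, ghzN_apply_const hN, smul_eq_mul, mul_right_comm,
      mul_inv_cancel₀ hsqrt, one_mul]

theorem stmt16 (N : ℕ) (hN : 2 ≤ N) :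
    {ψ : (Fin N → Fin 2) → ℂ | ∀ k : Fin N, (stabP N k).mulVec ψ = ψ}
      = ↑(Submodule.span ℂ {ghzN N}) := by
  have hN₀ : 0 < N := by omega
  ext ψ
  simp only [Set.mem_ofPred_eq, SetLike.mem_coe, Submodule.mem_span_singleton]
  constructor
  · intro h
    have hrev := (stabP_mulVec_eq_self_iff_of_val_eq_zero (k := ⟨0, hN₀⟩) rfl ψ).1 (h _)
    have hvan : ∀ i (l : Fin N), i ⟨0, hN₀⟩ ≠ i l → ψ i = 0 := by
      intro i l hl
      have hl₀ : (l : ℕ) ≠ 0 := fun h₀ => hl (congrArg i (Fin.ext h₀.symm))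
      exact (stabP_mulVec_eq_self_iff_of_val_ne_zero hl₀ ψ).1 (h l) i hl
    exact ⟨_, (eq_smul_ghzN hN₀ hrev hvan).symm⟩
  · rintro ⟨c, rfl⟩ k
    rw [mulVec_smul, stabP_mulVec_ghzN]
end
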